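/- Suppose n ≥ 2, V is an idempotent 2-locally finite variety (its free algebra F₂ on two generators is finite), and V realizes a pattern path x̄ = s₁, s₂, ..., sₙ = z̄ where each consecutive pair is related by →, ←, or ⇠ as prescribed by some fixed function f. Then the path can be realized by elements s₁, ..., sₙ ∈ F₂ in such a way that additionally sᵢ ⇢ sⱼ for every i ≤ j ≤ n. -/
import Mathlib


/-- A signature: a type of operation symbols with arities. -/
structure Sgn where
  ops : Type
  arity : ops → ℕ

/-- Terms over a signature with variables from `V`. -/
inductive Trm (S : Sgn) (V : Type) : Type
  | var : V → Trm S V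
  | op : (f : S.ops) → (Fin (S.arity f) → Trm S V) → Trm S V

/-- An algebra for a signature. -/
structure Alg (S : Sgn) where
  carrier : Type
  interp : (f : S.ops) → (Fin (S.arity f) → carrier) → carrier

/-- Evaluation of a term in an algebra under an assignment. -/
def Trm.eval {S : Sgn} {V : Type} (A : Alg S) (asgn : V → A.carrier) :
    Trm S V → A.carrier
  | .var v => asgn v
  | .op f args => A.interp f (fun i => (args i).eval A asgn)

/-- The identity `t ≈ u` holds throughout the class (variety) `K`. -/
def HoldsIn {S : Sgn} {V : Type} (K : Set (Alg S)) (t u : Trm S V) : Prop :=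
  ∀ A ∈ K, ∀ asgn : V → A.carrier, t.eval A asgn = u.eval A asgn

/-- Substitution of terms for variables. -/
def Trm.subst {S : Sgn} {V W : Type} (σ : V → Trm S W) : Trm S V → Trm S W
  | .var v => σ v
  | .op f args => .op f (fun i => (args i).subst σ)

/-- Every basic operation is idempotent throughout `K`. -/
def IdemK {S : Sgn} (K : Set (Alg S)) : Prop :=
  ∀ A ∈ K, ∀ (f : S.ops) (a : A.carrier), A.interp f (fun _ => a) = a

abbrev T3 (S : Sgn) := Trm S (Fin 3)
abbrev T2 (S : Sgn) := Trm S (Fin 2)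

def x3 {S : Sgn} : T3 S := .var 0
def y3 {S : Sgn} : T3 S := .var 1
def z3 {S : Sgn} : T3 S := .var 2

/-- The generator x̄ of the free algebra on two generators (terms as representatives). -/
def xF {S : Sgn} : T2 S := .var 0
/-- The generator z̄. -/
def zF {S : Sgn} : T2 S := .var 1

/-- `app3 t a b c` is the term `t(a,b,c)`. -/
def app3 {S : Sgn} {V : Type} (t : T3 S) (a b c : Trm S V) : Trm S V :=
  t.subst ![a, b, c]

/-- The binary term `ŝ(x,z)` viewed as a ternary term (not depending on `y`). -/
def bin3 {S : Sgn} (s : T2 S) : T3 S := s.subst ![x3, z3]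

/-- `sub2 s a b` is `s̄(a,b)`, the composition of binary terms. -/
def sub2 {S : Sgn} (s a b : T2 S) : T2 S := s.subst ![a, b]

/-- Dashed arrow `s ⇢ r`. -/
def DashedTo {S : Sgn} (K : Set (Alg S)) (s r : T2 S) : Prop :=
  ∃ t : T3 S, HoldsIn K (bin3 s) (app3 t x3 x3 z3) ∧ HoldsIn K (app3 t x3 z3 z3) (bin3 r)

/-- Solid arrow `s → r`. -/
def SolidTo {S : Sgn} (K : Set (Alg S)) (s r : T2 S) : Prop :=
  ∃ t : T3 S, HoldsIn K (bin3 s) (app3 t x3 x3 z3) ∧ HoldsIn K (app3 t x3 z3 z3) (bin3 r) ∧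
    HoldsIn K (app3 t x3 y3 x3) x3

/-- Edge labels for pattern paths: `→`, `←`, `⇠`. -/
inductive ArrowType | right | left | dashedLeft

/-- The relation on `F₂` associated to an edge label. -/
def ArrowRel {S : Sgn} (K : Set (Alg S)) : ArrowType → T2 S → T2 S → Prop
  | .right => SolidTo K
  | .left => fun a b => SolidTo K b a
  | .dashedLeft => fun a b => DashedTo K b a

/-- The sequence `s₁,…,sₙ` realizes the pattern path associated to `f`,
with `s₁ = x̄` and `sₙ = z̄`. -/
def RealizesWith {S : Sgn} (K : Set (Alg S)) (f : ℕ → ArrowType) (n : ℕ)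
    (s : ℕ → T2 S) : Prop :=
  s 1 = xF ∧ s n = zF ∧ ∀ i, 1 ≤ i → i < n → ArrowRel K (f i) (s i) (s (i+1))

/-- Equivalence of binary terms modulo the identities of `K`;
the quotient is the free algebra `F₂(V)`. -/
def termEqv {S : Sgn} (K : Set (Alg S)) : Setoid (T2 S) where
  r a b := HoldsIn K a b
  iseqv := ⟨fun _ _ _ _ => rfl, fun h A hA asgn => (h A hA asgn).symm,
    fun h1 h2 A hA asgn => (h1 A hA asgn).trans (h2 A hA asgn)⟩

/-- `V` is 2-locally finite: its free algebra on two generators is finite. -/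
def TwoLocFin {S : Sgn} (K : Set (Alg S)) : Prop :=
  Finite (Quotient (termEqv K))

section Aux

variable {S : Sgn}

/-- Composition `s ∘ w  =  s(x̄, w)`. -/
def compT (s w : T2 S) : T2 S := s.subst ![xF, w]

/-- Powers under composition; `pw s 0 = z̄` (the identity). -/
def pw (s : T2 S) : ℕ → T2 S
  | 0 => zF
  | j+1 => compT s (pw s j)

def chainAux (e : ℕ → T2 S) (n : ℕ) : ℕ → T2 S
  | 0 => zF
  | m+1 => compT (e (n - (m+1))) (chainAux e n m)

def chain (e : ℕ → T2 S) (n i : ℕ) : T2 S := chainAux e n (n - i)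

def ev2 (A : Alg S) (s : T2 S) (a b : A.carrier) : A.carrier := s.eval A ![a, b]
def ev3 (A : Alg S) (t : T3 S) (a b c : A.carrier) : A.carrier := t.eval A ![a, b, c]

lemma Trm.eval_subst {V W : Type} (A : Alg S) (σ : V → Trm S W) (t : Trm S V)
    (g : W → A.carrier) :
    (t.subst σ).eval A g = t.eval A (fun v => (σ v).eval A g) := by
  induction t with
  | var v => rfl
  | op f args ih =>
      simp only [Trm.subst, Trm.eval]
      congr 1
      funext i
      exact ih i

lemma ev3_x (A : Alg S) (a b c : A.carrier) : ev3 A x3 a b c = a := rfl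
lemma ev3_y (A : Alg S) (a b c : A.carrier) : ev3 A y3 a b c = b := rfl
lemma ev3_z (A : Alg S) (a b c : A.carrier) : ev3 A z3 a b c = c := rfl
lemma ev2_x (A : Alg S) (a b : A.carrier) : ev2 A xF a b = a := rfl
lemma ev2_z (A : Alg S) (a b : A.carrier) : ev2 A zF a b = b := rfl

lemma ev3_subst2 (A : Alg S) (s : T2 S) (p q : T3 S) (a b c : A.carrier) :
    ev3 A (s.subst ![p, q]) a b c = ev2 A s (ev3 A p a b c) (ev3 A q a b c) := by
  unfold ev3 ev2
  rw [Trm.eval_subst]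
  congr 1
  funext v
  fin_cases v <;> rfl

lemma ev3_subst3 (A : Alg S) (t : T3 S) (p q r : T3 S) (a b c : A.carrier) :
    ev3 A (t.subst ![p, q, r]) a b c
      = ev3 A t (ev3 A p a b c) (ev3 A q a b c) (ev3 A r a b c) := by
  unfold ev3
  rw [Trm.eval_subst]
  congr 1
  funext v
  fin_cases v <;> rfl

lemma ev2_subst2 (A : Alg S) (s a b : T2 S) (u v : A.carrier) :
    ev2 A (s.subst ![a, b]) u v = ev2 A s (ev2 A a u v) (ev2 A b u v) := by
  unfold ev2
  rw [Trm.eval_subst]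
  congr 1
  funext w
  fin_cases w <;> rfl

lemma ev3_bin3 (A : Alg S) (s : T2 S) (a b c : A.carrier) :
    ev3 A (bin3 s) a b c = ev2 A s a c := by
  rw [bin3, ev3_subst2, ev3_x, ev3_z]

lemma ev3_app3 (A : Alg S) (t : T3 S) (p q r : T3 S) (a b c : A.carrier) :
    ev3 A (app3 t p q r) a b c
      = ev3 A t (ev3 A p a b c) (ev3 A q a b c) (ev3 A r a b c) := by
  rw [app3, ev3_subst3]

lemma ev2_compT (A : Alg S) (s w : T2 S) (u v : A.carrier) :
    ev2 A (compT s w) u v = ev2 A s u (ev2 A w u v) := by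
  rw [compT, ev2_subst2, ev2_x]

variable (K : Set (Alg S))

lemma holds2_of {u v : T2 S}
    (h : ∀ A ∈ K, ∀ a b : A.carrier, ev2 A u a b = ev2 A v a b) : HoldsIn K u v := by
  intro A hA g
  have hg : ![g 0, g 1] = g := by funext i; fin_cases i <;> rfl
  have := h A hA (g 0) (g 1)
  unfold ev2 at this
  rwa [hg] at this

lemma holds2_pw {u v : T2 S} (h : HoldsIn K u v) :
    ∀ A ∈ K, ∀ a b : A.carrier, ev2 A u a b = ev2 A v a b :=
  fun A hA a b => h A hA ![a, b]

lemma holds3_of {u v : T3 S}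
    (h : ∀ A ∈ K, ∀ a b c : A.carrier, ev3 A u a b c = ev3 A v a b c) :
    HoldsIn K u v := by
  intro A hA g
  have hg : ![g 0, g 1, g 2] = g := by funext i; fin_cases i <;> rfl
  have := h A hA (g 0) (g 1) (g 2)
  unfold ev3 at this
  rwa [hg] at this

lemma holds3_pw {u v : T3 S} (h : HoldsIn K u v) :
    ∀ A ∈ K, ∀ a b c : A.carrier, ev3 A u a b c = ev3 A v a b c :=
  fun A hA a b c => h A hA ![a, b, c]

lemma holdsIn_refl {V : Type} (u : Trm S V) : HoldsIn K u u := fun _ _ _ => rfl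

lemma eval_const (hid : IdemK K) {V : Type} {A : Alg S} (hA : A ∈ K) (t : Trm S V)
    (g : V → A.carrier) (a : A.carrier) (h : ∀ v, g v = a) : t.eval A g = a := by
  induction t with
  | var v => exact h v
  | op f args ih =>
      simp only [Trm.eval]
      have : (fun i => (args i).eval A g) = fun _ => a := funext fun i => ih i
      rw [this]
      exact hid A hA f a

lemma ev2_idem (hid : IdemK K) {A : Alg S} (hA : A ∈ K) (s : T2 S) (a : A.carrier) :
    ev2 A s a a = a :=
  eval_const K hid hA s ![a, a] a (by intro v; fin_cases v <;> rfl)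

/-! ### Pointwise characterizations of the arrows -/

lemma dashedTo_of {s r : T2 S} (t : T3 S)
    (h1 : ∀ A ∈ K, ∀ a c : A.carrier, ev2 A s a c = ev3 A t a a c)
    (h2 : ∀ A ∈ K, ∀ a c : A.carrier, ev3 A t a c c = ev2 A r a c) :
    DashedTo K s r := by
  refine ⟨t, holds3_of K ?_, holds3_of K ?_⟩
  · intro A hA a b c
    rw [ev3_bin3, ev3_app3, ev3_x, ev3_z]
    exact h1 A hA a c
  · intro A hA a b c
    rw [ev3_bin3, ev3_app3, ev3_x, ev3_z]
    exact h2 A hA a c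

lemma solidTo_of {s r : T2 S} (t : T3 S)
    (h1 : ∀ A ∈ K, ∀ a c : A.carrier, ev2 A s a c = ev3 A t a a c)
    (h2 : ∀ A ∈ K, ∀ a c : A.carrier, ev3 A t a c c = ev2 A r a c)
    (h3 : ∀ A ∈ K, ∀ a b : A.carrier, ev3 A t a b a = a) :
    SolidTo K s r := by
  refine ⟨t, holds3_of K ?_, holds3_of K ?_, holds3_of K ?_⟩
  · intro A hA a b c
    rw [ev3_bin3, ev3_app3, ev3_x, ev3_z]
    exact h1 A hA a c
  · intro A hA a b c
    rw [ev3_bin3, ev3_app3, ev3_x, ev3_z]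
    exact h2 A hA a c
  · intro A hA a b c
    simp only [ev3_app3, ev3_x, ev3_y]
    exact h3 A hA a b

lemma dashedTo_pw {s r : T2 S} (h : DashedTo K s r) : ∃ t : T3 S,
    (∀ A ∈ K, ∀ a c : A.carrier, ev2 A s a c = ev3 A t a a c) ∧
    (∀ A ∈ K, ∀ a c : A.carrier, ev3 A t a c c = ev2 A r a c) := by
  obtain ⟨t, h1, h2⟩ := h
  refine ⟨t, fun A hA a c => ?_, fun A hA a c => ?_⟩
  · have := holds3_pw K h1 A hA a a c
    rwa [ev3_bin3, ev3_app3, ev3_x, ev3_z] at this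
  · have := holds3_pw K h2 A hA a c c
    rwa [ev3_bin3, ev3_app3, ev3_x, ev3_z] at this

lemma solidTo_pw {s r : T2 S} (h : SolidTo K s r) : ∃ t : T3 S,
    (∀ A ∈ K, ∀ a c : A.carrier, ev2 A s a c = ev3 A t a a c) ∧
    (∀ A ∈ K, ∀ a c : A.carrier, ev3 A t a c c = ev2 A r a c) ∧
    (∀ A ∈ K, ∀ a b : A.carrier, ev3 A t a b a = a) := by
  obtain ⟨t, h1, h2, h3⟩ := h
  refine ⟨t, fun A hA a c => ?_, fun A hA a c => ?_, fun A hA a b => ?_⟩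
  · have := holds3_pw K h1 A hA a a c
    rwa [ev3_bin3, ev3_app3, ev3_x, ev3_z] at this
  · have := holds3_pw K h2 A hA a c c
    rwa [ev3_bin3, ev3_app3, ev3_x, ev3_z] at this
  · have := holds3_pw K h3 A hA a b a
    simpa only [ev3_app3, ev3_x, ev3_y] using this

lemma dashedTo_refl (s : T2 S) : DashedTo K s s := by
  refine dashedTo_of K (bin3 s) ?_ ?_ <;>
    · intro A hA a c
      rw [ev3_bin3]

end Aux

section Aux2

variable {S : Sgn} (K : Set (Alg S))

/-! ### Step lemmas -/

/-- If `a ⇢ b` then `s(x̄, a) ⇢ b`. -/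
lemma dash_step (hid : IdemK K) (s : T2 S) {a b : T2 S} (h : DashedTo K a b) :
    DashedTo K (compT s a) b := by
  obtain ⟨γ, h1, h2⟩ := dashedTo_pw K h
  refine dashedTo_of K (s.subst ![b.subst ![x3, y3], γ]) ?_ ?_
  · intro A hA a0 z
    simp only [ev3_subst2, ev3_x, ev3_y]
    rw [ev2_compT, ev2_idem K hid hA b, ← h1 A hA]
  · intro A hA a0 z
    simp only [ev3_subst2, ev3_x, ev3_y]
    rw [h2 A hA, ev2_idem K hid hA s]

lemma comp_dashed (hid : IdemK K) {s s' w w' : T2 S}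
    (hs : DashedTo K s s') (hw : DashedTo K w w') :
    DashedTo K (compT s w) (compT s' w') := by
  obtain ⟨t, t1, t2⟩ := dashedTo_pw K hs
  obtain ⟨γ, g1, g2⟩ := dashedTo_pw K hw
  refine dashedTo_of K (t.subst ![x3, w'.subst ![x3, y3], γ]) ?_ ?_
  · intro A hA a z
    simp only [ev3_subst3, ev3_subst2, ev3_x, ev3_y]
    rw [ev2_idem K hid hA w', ← g1 A hA, ev2_compT, t1 A hA]
  · intro A hA a z
    simp only [ev3_subst3, ev3_subst2, ev3_x, ev3_y]
    rw [g2 A hA, t2 A hA, ev2_compT]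

lemma comp_solid (hid : IdemK K) {s s' w w' : T2 S}
    (hs : SolidTo K s s') (hw : SolidTo K w w') :
    SolidTo K (compT s w) (compT s' w') := by
  obtain ⟨t, t1, t2, t3⟩ := solidTo_pw K hs
  obtain ⟨γ, g1, g2, g3⟩ := solidTo_pw K hw
  refine solidTo_of K (t.subst ![x3, w'.subst ![x3, y3], γ]) ?_ ?_ ?_
  · intro A hA a z
    simp only [ev3_subst3, ev3_subst2, ev3_x, ev3_y]
    rw [ev2_idem K hid hA w', ← g1 A hA, ev2_compT, t1 A hA]
  · intro A hA a z
    simp only [ev3_subst3, ev3_subst2, ev3_x, ev3_y]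
    rw [g2 A hA, t2 A hA, ev2_compT]
  · intro A hA a b
    simp only [ev3_subst3, ev3_subst2, ev3_x, ev3_y]
    rw [g3 A hA, t3 A hA]

/-- pointwise form of absorption `q ∘ c ≈ c`. -/
lemma absorb_pw {q c : T2 S} (hqc : HoldsIn K (compT q c) c) :
    ∀ A ∈ K, ∀ a z : A.carrier, ev2 A q a (ev2 A c a z) = ev2 A c a z := by
  intro A hA a z
  have := holds2_pw K hqc A hA a z
  rwa [ev2_compT] at this

lemma step_right (hid : IdemK K) {p q c : T2 S} (hpq : SolidTo K p q)
    (hqc : HoldsIn K (compT q c) c) : SolidTo K (compT p c) c := by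
  obtain ⟨t, t1, t2, t3⟩ := solidTo_pw K hpq
  refine solidTo_of K (t.subst ![x3, c.subst ![x3, y3], c.subst ![x3, z3]]) ?_ ?_ ?_
  · intro A hA a z
    simp only [ev3_subst3, ev3_subst2, ev3_x, ev3_y, ev3_z]
    rw [ev2_idem K hid hA c, ev2_compT, t1 A hA]
  · intro A hA a z
    simp only [ev3_subst3, ev3_subst2, ev3_x, ev3_y, ev3_z]
    rw [t2 A hA, absorb_pw K hqc A hA]
  · intro A hA a b
    simp only [ev3_subst3, ev3_subst2, ev3_x, ev3_y, ev3_z]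
    rw [ev2_idem K hid hA c, t3 A hA]

lemma step_left (hid : IdemK K) {p q c : T2 S} (hqp : SolidTo K q p)
    (hqc : HoldsIn K (compT q c) c) : SolidTo K c (compT p c) := by
  obtain ⟨t, t1, t2, t3⟩ := solidTo_pw K hqp
  refine solidTo_of K (t.subst ![x3, c.subst ![x3, y3], c.subst ![x3, z3]]) ?_ ?_ ?_
  · intro A hA a z
    simp only [ev3_subst3, ev3_subst2, ev3_x, ev3_y, ev3_z]
    rw [ev2_idem K hid hA c, ← t1 A hA, absorb_pw K hqc A hA]
  · intro A hA a z
    simp only [ev3_subst3, ev3_subst2, ev3_x, ev3_y, ev3_z]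
    rw [t2 A hA, ev2_compT]
  · intro A hA a b
    simp only [ev3_subst3, ev3_subst2, ev3_x, ev3_y, ev3_z]
    rw [ev2_idem K hid hA c, t3 A hA]

lemma step_dleft (hid : IdemK K) {p q c : T2 S} (hqp : DashedTo K q p)
    (hqc : HoldsIn K (compT q c) c) : DashedTo K c (compT p c) := by
  obtain ⟨t, t1, t2⟩ := dashedTo_pw K hqp
  refine dashedTo_of K (t.subst ![x3, c.subst ![x3, y3], c.subst ![x3, z3]]) ?_ ?_
  · intro A hA a z
    simp only [ev3_subst3, ev3_subst2, ev3_x, ev3_y, ev3_z]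
    rw [ev2_idem K hid hA c, ← t1 A hA, absorb_pw K hqc A hA]
  · intro A hA a z
    simp only [ev3_subst3, ev3_subst2, ev3_x, ev3_y, ev3_z]
    rw [t2 A hA, ev2_compT]

/-! ### Syntactic facts about `compT` -/

lemma compT_xF (w : T2 S) : compT xF w = xF := rfl

lemma compT_zF (w : T2 S) : compT zF w = w := rfl

lemma subst_id2 (s : T2 S) : s.subst ![xF, zF] = s := by
  induction s with
  | var v => fin_cases v <;> rfl
  | op f args ih =>
      simp only [Trm.subst]
      congr 1
      funext i
      exact ih i

lemma compT_one (s : T2 S) : compT s zF = s := subst_id2 s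

/-! ### Powering a realizing sequence -/

lemma comp_realizes (hid : IdemK K) {f : ℕ → ArrowType} {n : ℕ} {s w : ℕ → T2 S}
    (hs : RealizesWith K f n s) (hw : RealizesWith K f n w) :
    RealizesWith K f n (fun i => compT (s i) (w i)) := by
  refine ⟨?_, ?_, ?_⟩
  · show compT (s 1) (w 1) = xF
    rw [hs.1, compT_xF]
  · show compT (s n) (w n) = zF
    rw [hs.2.1, hw.2.1, compT_zF]
  · intro i h1 h2
    have e1 := hs.2.2 i h1 h2
    have e2 := hw.2.2 i h1 h2
    cases hfi : f i <;> rw [hfi] at e1 e2 <;> simp only [ArrowRel] at e1 e2 ⊢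
    · exact comp_solid K hid e1 e2
    · exact comp_solid K hid e1 e2
    · exact comp_dashed K hid e1 e2

lemma realizes_pw (hid : IdemK K) {f : ℕ → ArrowType} {n : ℕ} {s : ℕ → T2 S}
    (hs : RealizesWith K f n s) :
    ∀ j, RealizesWith K f n (fun i => pw (s i) (j + 1)) := by
  intro j
  induction j with
  | zero =>
      have hfun : (fun i => pw (s i) 1) = s := funext fun i => compT_one (s i)
      rwa [hfun]
  | succ j ih => exact comp_realizes K hid hs ih

/-! ### The chain construction -/

lemma chain_succ (e : ℕ → T2 S) {n i : ℕ} (h : i < n) :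
    chain e n i = compT (e i) (chain e n (i + 1)) := by
  have h1 : n - i = (n - (i + 1)) + 1 := by omega
  have h2 : n - ((n - (i + 1)) + 1) = i := by omega
  show chainAux e n (n - i) = compT (e i) (chain e n (i + 1))
  rw [h1]
  show compT (e (n - ((n - (i + 1)) + 1))) (chainAux e n (n - (i + 1)))
      = compT (e i) (chain e n (i + 1))
  rw [h2]
  rfl

lemma chain_last (e : ℕ → T2 S) (n : ℕ) : chain e n n = zF := by
  show chainAux e n (n - n) = zF
  rw [Nat.sub_self]
  rfl

lemma chain_absorb (hid : IdemK K) (e : ℕ → T2 S) {n : ℕ} (hen : e n = zF)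
    (hidem : ∀ m, HoldsIn K (compT (e m) (e m)) (e m)) {i : ℕ} (hin : i ≤ n) :
    HoldsIn K (compT (e i) (chain e n i)) (chain e n i) := by
  rcases eq_or_lt_of_le hin with rfl | hlt
  · rw [chain_last, hen, compT_zF]
    exact holdsIn_refl K _
  · rw [chain_succ e hlt]
    apply holds2_of K
    intro A hA a z
    have hq : ∀ b, ev2 A (e i) a (ev2 A (e i) a b) = ev2 A (e i) a b := by
      intro b
      have := holds2_pw K (hidem i) A hA a b
      rwa [ev2_compT] at this
    simp only [ev2_compT]
    exact hq _

lemma chain_dash (hid : IdemK K) (e : ℕ → T2 S) (n : ℕ) :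
    ∀ d i, i + d ≤ n → DashedTo K (chain e n i) (chain e n (i + d)) := by
  intro d
  induction d with
  | zero =>
      intro i _
      rw [Nat.add_zero]
      exact dashedTo_refl K _
  | succ d ih =>
      intro i h
      have hlt : i < n := by omega
      have ihd := ih (i + 1) (by omega)
      have heq : (i + 1) + d = i + (d + 1) := by omega
      rw [heq] at ihd
      rw [chain_succ e hlt]
      exact dash_step K hid _ ihd

lemma chain_realizes (hid : IdemK K) {f : ℕ → ArrowType} {n : ℕ} (hn : 2 ≤ n)
    {e : ℕ → T2 S} (he : RealizesWith K f n e)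
    (hidem : ∀ m, HoldsIn K (compT (e m) (e m)) (e m)) :
    RealizesWith K f n (chain e n) := by
  refine ⟨?_, chain_last e n, ?_⟩
  · rw [chain_succ e (show 1 < n by omega), he.1, compT_xF]
  · intro i h1 h2
    have E := chain_absorb K hid e he.2.1 hidem (show i + 1 ≤ n by omega)
    have edge := he.2.2 i h1 h2
    rw [chain_succ e h2]
    cases hfi : f i <;> rw [hfi] at edge <;> simp only [ArrowRel] at edge ⊢
    · exact step_right K hid edge E
    · exact step_left K hid edge E
    · exact step_dleft K hid edge E

/-! ### The finite monoid of binary terms -/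

lemma compT_congr {a a' b b' : T2 S} (ha : HoldsIn K a a') (hb : HoldsIn K b b') :
    HoldsIn K (compT a b) (compT a' b') := by
  apply holds2_of K
  intro A hA u v
  rw [ev2_compT, ev2_compT, holds2_pw K hb A hA, holds2_pw K ha A hA]

instance qMonoid {S : Sgn} {K : Set (Alg S)} : Monoid (Quotient (termEqv K)) where
  mul := Quotient.lift₂ (fun a b => Quotient.mk (termEqv K) (compT a b))
    (fun _ _ _ _ ha hb => Quotient.sound (compT_congr K ha hb))
  one := Quotient.mk (termEqv K) zF
  mul_assoc := by
    intro x y z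
    induction x using Quotient.ind
    induction y using Quotient.ind
    induction z using Quotient.ind
    apply Quotient.sound
    show HoldsIn K _ _
    apply holds2_of K
    intro A hA u v
    simp only [ev2_compT]
  one_mul := by
    intro x
    induction x using Quotient.ind
    exact congrArg (Quotient.mk (termEqv K)) (compT_zF _)
  mul_one := by
    intro x
    induction x using Quotient.ind
    exact congrArg (Quotient.mk (termEqv K)) (compT_one _)

lemma qpow (s : T2 S) :
    ∀ j, (Quotient.mk (termEqv K) s) ^ j = Quotient.mk (termEqv K) (pw s j) := by
  intro j
  induction j with
  | zero => rw [pow_zero]; rfl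
  | succ j ih => rw [pow_succ', ih]; rfl

lemma exists_idem_pow_all (M : Type*) [Monoid M] [Finite M] :
    ∃ k, 1 ≤ k ∧ ∀ a : M, a ^ k * a ^ k = a ^ k := by
  have hne : Nonempty M := ⟨1⟩
  set N := Nat.card M with hN
  have hN1 : 0 < N := Nat.card_pos
  refine ⟨(Nat.factorial N), Nat.one_le_iff_ne_zero.mpr (Nat.factorial_ne_zero N), ?_⟩
  intro a
  obtain ⟨i, j, hij, hpow⟩ :
      ∃ i j : Fin (N + 1), i ≠ j ∧ a ^ (i.val + 1) = a ^ (j.val + 1) := by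
    have hft := Fintype.ofFinite M
    obtain ⟨i, j, hij, h⟩ := Fintype.exists_ne_map_eq_of_card_lt
      (fun i : Fin (N + 1) => a ^ (i.val + 1))
      (by rw [Fintype.card_fin, hN, Nat.card_eq_fintype_card]; omega)
    exact ⟨i, j, hij, h⟩
  -- normalize so exponents i0 < i0 + p
  obtain ⟨i0, p, hp1, hpN, hi0N, hkey⟩ :
      ∃ i0 p, 1 ≤ p ∧ p ≤ N ∧ i0 ≤ N ∧ a ^ (i0 + p) = a ^ i0 := by
    have hne' : i.val ≠ j.val := fun h => hij (Fin.ext h)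
    have hiv : i.val ≤ N := by omega
    have hjv : j.val ≤ N := by omega
    rcases lt_or_gt_of_ne hne' with hlt | hlt
    · refine ⟨i.val + 1, j.val - i.val, by omega, by omega, by omega, ?_⟩
      rw [show i.val + 1 + (j.val - i.val) = j.val + 1 by omega]
      exact hpow.symm
    · refine ⟨j.val + 1, i.val - j.val, by omega, by omega, by omega, ?_⟩
      rw [show j.val + 1 + (i.val - j.val) = i.val + 1 by omega]
      exact hpow
  have pump : ∀ r, a ^ (i0 + r + p) = a ^ (i0 + r) := by
    intro r
    have e1 : i0 + r + p = (i0 + p) + r := by omega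
    rw [e1, pow_add, hkey, ← pow_add]
  have pump_mul : ∀ m r, a ^ (i0 + r + m * p) = a ^ (i0 + r) := by
    intro m
    induction m with
    | zero => intro r; simp
    | succ m ih =>
        intro r
        have e : i0 + r + (m + 1) * p = i0 + (r + m * p) + p := by ring
        rw [e, pump (r + m * p)]
        have e2 : i0 + (r + m * p) = i0 + r + m * p := by omega
        rw [e2, ih r]
  have hdvd : p ∣ (Nat.factorial N) := Nat.dvd_factorial (by omega) hpN
  obtain ⟨m, hm⟩ := hdvd
  have hi0' : i0 ≤ (Nat.factorial N) := le_trans hi0N (Nat.self_le_factorial N)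
  have e3 : m * p = (Nat.factorial N) := by rw [mul_comm]; exact hm.symm
  calc a ^ (Nat.factorial N) * a ^ (Nat.factorial N) = a ^ ((Nat.factorial N) + (Nat.factorial N)) := (pow_add a _ _).symm
    _ = a ^ (i0 + ((Nat.factorial N) - i0) + m * p) := by rw [e3]; congr 1; omega
    _ = a ^ (i0 + ((Nat.factorial N) - i0)) := pump_mul m ((Nat.factorial N) - i0)
    _ = a ^ (Nat.factorial N) := by congr 1; omega

end Aux2

/-- in a 2-locally finite idempotent variety, any realizable
pattern path can be realized so that moreover `sᵢ ⇢ sⱼ` for all `i ≤ j ≤ n`. -/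
theorem locally_finite_add_dashed {S : Sgn} (K : Set (Alg S)) (hid : IdemK K)
    (hfin : TwoLocFin K) (n : ℕ) (hn : 2 ≤ n) (f : ℕ → ArrowType)
    (h : ∃ s : ℕ → T2 S, RealizesWith K f n s) :
    ∃ s : ℕ → T2 S, RealizesWith K f n s ∧
      ∀ i j, 1 ≤ i → i ≤ j → j ≤ n → DashedTo K (s i) (s j) := by
  obtain ⟨s, hs⟩ := h
  haveI : Finite (Quotient (termEqv K)) := hfin
  obtain ⟨k, hk1, hkid⟩ := exists_idem_pow_all (Quotient (termEqv K))
  have hidem_all : ∀ b : T2 S, HoldsIn K (compT (pw b k) (pw b k)) (pw b k) := by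
    intro b
    have h0 := hkid (Quotient.mk (termEqv K) b)
    rw [qpow K b k] at h0
    exact Quotient.exact h0
  set e : ℕ → T2 S := fun i => pw (s i) k with hedef
  have he : RealizesWith K f n e := by
    have h2 := realizes_pw K hid hs (k - 1)
    have hk : k - 1 + 1 = k := by omega
    rw [hk] at h2
    exact h2
  have he_idem : ∀ m, HoldsIn K (compT (e m) (e m)) (e m) := fun m => hidem_all (s m)
  refine ⟨chain e n, chain_realizes K hid hn he he_idem, ?_⟩
  intro i j hi hij hjn
  have hd := chain_dash K hid e n (j - i) i (by omega)
  rwa [Nat.add_sub_cancel' hij] at hd
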